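/- arXiv:0902.3576 — 2 statements merged into one kernel-verified Lean document; each statement's English description precedes it below -/
import Mathlib

section
/- The images of the generators s_a (a ∈ A) span a central abelian Lie subalgebra, and the Lie algebra t̃_A decomposes as a direct sum: there is a Lie algebra isomorphism from t̃_A onto the product Lie algebra t_A × (A → ℚ) (where A → ℚ carries the trivial (abelian) Lie bracket), which sends the class of each generator t_{ab} to (t_{ab}, 0) and the class of each generator s_a to (0, e_a), where e_a denotes the indicator function of a. -/
/-! The extended Drinfeld–Kohno Lie algebra `t̃_A` decomposes as `t_A × (A → ℚ)`. -/

/-- Generators `t_{ab}` of the Drinfeld–Kohno Lie algebra `t_A`. -/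
inductive TGen (A : Type) : Type
  | t : (a b : A) → a ≠ b → TGen A

/-- Generators `t_{ab}` and `s_a` of the extended Drinfeld–Kohno Lie algebra `t̃_A`. -/
inductive ExtGen (A : Type) : Type
  | t : (a b : A) → a ≠ b → ExtGen A
  | s : A → ExtGen A

open FreeLieAlgebra in
/-- The defining relations of `t_A`. -/
def tRels (A : Type) : Set (FreeLieAlgebra ℚ (TGen A)) :=
  {x | ∃ (a b : A) (h : a ≠ b),
      x = of ℚ (TGen.t a b h) - of ℚ (TGen.t b a h.symm)} ∪
  {x | ∃ (a b c d : A) (h₁ : a ≠ b) (h₂ : c ≠ d),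
      a ≠ c ∧ a ≠ d ∧ b ≠ c ∧ b ≠ d ∧
      x = ⁅of ℚ (TGen.t a b h₁), of ℚ (TGen.t c d h₂)⁆} ∪
  {x | ∃ (a b c : A) (hab : a ≠ b) (hbc : b ≠ c) (hac : a ≠ c),
      x = ⁅of ℚ (TGen.t a c hac), of ℚ (TGen.t a b hab) + of ℚ (TGen.t b c hbc)⁆}

open FreeLieAlgebra in
/-- The defining relations of `t̃_A`: the relations of `t_A` together with the
centrality of the `s_a`. -/
def extRels (A : Type) : Set (FreeLieAlgebra ℚ (ExtGen A)) :=
  {x | ∃ (a b : A) (h : a ≠ b),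
      x = of ℚ (ExtGen.t a b h) - of ℚ (ExtGen.t b a h.symm)} ∪
  {x | ∃ (a b c d : A) (h₁ : a ≠ b) (h₂ : c ≠ d),
      a ≠ c ∧ a ≠ d ∧ b ≠ c ∧ b ≠ d ∧
      x = ⁅of ℚ (ExtGen.t a b h₁), of ℚ (ExtGen.t c d h₂)⁆} ∪
  {x | ∃ (a b c : A) (hab : a ≠ b) (hbc : b ≠ c) (hac : a ≠ c),
      x = ⁅of ℚ (ExtGen.t a c hac), of ℚ (ExtGen.t a b hab) + of ℚ (ExtGen.t b c hbc)⁆} ∪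
  {x | ∃ (a : A) (g : ExtGen A), x = ⁅of ℚ (ExtGen.s a), of ℚ g⁆}

/-- The Lie ideal generated by the relations of `t_A`. -/
noncomputable def tIdeal (A : Type) : LieIdeal ℚ (FreeLieAlgebra ℚ (TGen A)) :=
  LieSubmodule.lieSpan ℚ _ (tRels A)

/-- The Lie ideal generated by the relations of `t̃_A`. -/
noncomputable def extIdeal (A : Type) : LieIdeal ℚ (FreeLieAlgebra ℚ (ExtGen A)) :=
  LieSubmodule.lieSpan ℚ _ (extRels A)

/-- The Drinfeld–Kohno Lie algebra `t_A`. -/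
abbrev DKt (A : Type) := FreeLieAlgebra ℚ (TGen A) ⧸ tIdeal A

/-- The extended Drinfeld–Kohno Lie algebra `t̃_A`. -/
abbrev DKtTilde (A : Type) := FreeLieAlgebra ℚ (ExtGen A) ⧸ extIdeal A

/-- The class of the generator `t_{ab}` in `t_A`. -/
noncomputable def tcl {A : Type} (a b : A) (h : a ≠ b) : DKt A :=
  LieSubmodule.Quotient.mk (N := tIdeal A) (FreeLieAlgebra.of ℚ (TGen.t a b h))

/-- The class of the generator `t_{ab}` in `t̃_A`. -/
noncomputable def ttcl {A : Type} (a b : A) (h : a ≠ b) : DKtTilde A :=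
  LieSubmodule.Quotient.mk (N := extIdeal A) (FreeLieAlgebra.of ℚ (ExtGen.t a b h))

/-- The class of the generator `s_a` in `t̃_A`. -/
noncomputable def scl {A : Type} (a : A) : DKtTilde A :=
  LieSubmodule.Quotient.mk (N := extIdeal A) (FreeLieAlgebra.of ℚ (ExtGen.s a))

section ProdLie

variable {L M : Type} [LieRing L] [LieRing M]

/-- Componentwise bracket on a product. -/
instance Prod.instLieRingBracket : Bracket (L × M) (L × M) :=
  ⟨fun x y => (⁅x.1, y.1⁆, ⁅x.2, y.2⁆)⟩

@[simp] theorem Prod.bracket_def (x y : L × M) :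
    ⁅x, y⁆ = (⁅x.1, y.1⁆, ⁅x.2, y.2⁆) := rfl

/-- The product of two Lie rings, with componentwise bracket. -/
instance Prod.instLieRing : LieRing (L × M) where
  add_lie x y z := by ext <;> simp
  lie_add x y z := by ext <;> simp
  lie_self x := by ext <;> simp
  leibniz_lie x y z := by ext <;> simp

/-- The product of two Lie algebras. -/
instance Prod.instLieAlgebra (R : Type*) [CommRing R] [LieAlgebra R L] [LieAlgebra R M] :
    LieAlgebra R (L × M) where
  lie_smul t x y := by ext <;> simp

end ProdLie

attribute [local instance 100] LieRing.ofAssociativeRing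

/-! `t̃_A` is presented by the relations of `t_A` on the `t_{ab}` together with centrality of the
`s_a`, so the universal properties of the two presentations give Lie morphisms
`t̃_A → t_A × (A → ℚ)`, `t_{ab} ↦ (t_{ab}, 0)`, `s_a ↦ (0, e_a)`, and
`t_A × (A → ℚ) → t̃_A`, `(x, f) ↦ ι x + ∑ₐ f a • s_a`, where `ι` sends `t_{ab}` to `t_{ab}`.
The second map respects brackets because each `s_a` commutes with a generating set of `t̃_A` and is
therefore central. Both composites fix generators, hence are the identity. -/

namespace LieIdeal

variable {R L M : Type*} [CommRing R] [LieRing L] [LieAlgebra R L] [LieRing M] [LieAlgebra R M]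
  (I : LieIdeal R L)

def mkQ : L →ₗ⁅R⁆ L ⧸ I :=
  { (I : Submodule R L).mkQ with map_lie' := LieSubmodule.Quotient.mk_bracket I _ _ }

theorem mkQ_surjective : Function.Surjective I.mkQ :=
  LieSubmodule.Quotient.surjective_mk' I

theorem mkQ_eq_zero {x : L} : I.mkQ x = 0 ↔ x ∈ I :=
  LieSubmodule.Quotient.mk_eq_zero'

def liftQ (f : L →ₗ⁅R⁆ M) (h : I ≤ f.ker) : L ⧸ I →ₗ⁅R⁆ M :=
  { (I : Submodule R L).liftQ f.toLinearMap h with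
    map_lie' := by
      rintro ⟨x⟩ ⟨y⟩
      exact f.map_lie x y }

theorem quotient_hom_ext {f g : L ⧸ I →ₗ⁅R⁆ M} (h : f.comp I.mkQ = g.comp I.mkQ) : f = g :=
  LieHom.ext fun x => by
    obtain ⟨x, rfl⟩ := I.mkQ_surjective x
    exact LieHom.congr_fun h x

end LieIdeal

namespace FreeLieAlgebra

variable {R X L : Type*} [CommRing R] [LieRing L] [LieAlgebra R L]

theorem lieSpan_range_of : LieSubalgebra.lieSpan R (FreeLieAlgebra R X) (Set.range (of R)) = ⊤ := by
  set K := LieSubalgebra.lieSpan R (FreeLieAlgebra R X) (Set.range (of R))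
  have hK : K.incl.comp (lift R fun x => ⟨of R x, LieSubalgebra.subset_lieSpan ⟨x, rfl⟩⟩) =
      LieHom.id :=
    hom_ext fun x => by simp
  refine eq_top_iff.mpr fun w _ => ?_
  rw [← LieHom.id_apply (R := R) w, ← hK]
  exact Subtype.property _

theorem lieSpan_range_mkQ_of (I : LieIdeal R (FreeLieAlgebra R X)) :
    LieSubalgebra.lieSpan R _ (Set.range fun x => I.mkQ (of R x)) = ⊤ := by
  rw [Set.range_comp', ← LieSubalgebra.map_lieSpan, lieSpan_range_of, ← LieSubalgebra.map_top,
    LieHom.range_eq_top]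
  exact I.mkQ_surjective

theorem quotient_hom_ext (I : LieIdeal R (FreeLieAlgebra R X)) {f g : _ ⧸ I →ₗ⁅R⁆ L}
    (h : ∀ x, f (I.mkQ (of R x)) = g (I.mkQ (of R x))) : f = g :=
  I.quotient_hom_ext (hom_ext h)

end FreeLieAlgebra

theorem LieAlgebra.mem_center_of_lieSpan_eq_top {R L : Type*} [CommRing R] [LieRing L]
    [LieAlgebra R L] {s : Set L} (hs : LieSubalgebra.lieSpan R L s = ⊤) {z : L}
    (hz : ∀ x ∈ s, ⁅x, z⁆ = 0) : z ∈ LieAlgebra.center R L := by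
  refine (LieModule.mem_maxTrivSubmodule R L L z).mpr fun x => ?_
  have hx : x ∈ LieSubalgebra.lieSpan R L s := hs ▸ LieSubalgebra.mem_top x
  induction hx using LieSubalgebra.lieSpan_induction with
  | mem x hx => exact hz x hx
  | zero => exact zero_lie z
  | add x y _ _ hx hy => rw [add_lie, hx, hy, add_zero]
  | smul t x _ hx => rw [smul_lie, hx, smul_zero]
  | lie x y _ _ hx hy => rw [lie_lie, hx, hy, lie_zero, lie_zero, sub_zero]

def LieHom.coprodOfCentral {R L M K : Type*} [CommRing R] [LieRing L] [LieAlgebra R L]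
    [LieRing M] [LieAlgebra R M] [IsLieAbelian M] [LieRing K] [LieAlgebra R K]
    (f : L →ₗ⁅R⁆ K) (g : M →ₗ[R] K) (hg : ∀ m, g m ∈ LieAlgebra.center R K) :
    L × M →ₗ⁅R⁆ K :=
  { f.toLinearMap.coprod g with
    map_lie' := by
      rintro ⟨x, m⟩ ⟨y, n⟩
      have central : ∀ m z, ⁅z, g m⁆ = 0 := fun m =>
        (LieModule.mem_maxTrivSubmodule R K K _).mp (hg m)
      show f ⁅x, y⁆ + g ⁅m, n⁆ = ⁅f x + g m, f y + g n⁆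
      rw [trivial_lie_zero M M m n, map_zero, add_zero, lie_add, add_lie, add_lie, central, central,
        ← lie_skew (g m) (f y), central, neg_zero, LieHom.map_lie]
      abel }

instance CommRing.isLieAbelian {A : Type*} [CommRing A] : IsLieAbelian A :=
  ⟨fun x y => sub_eq_zero.mpr (mul_comm x y)⟩

structure IsDrinfeldKohnoFamily {A L : Type*} [LieRing L] (u : ∀ a b : A, a ≠ b → L) : Prop where
  symm : ∀ a b (h : a ≠ b), u a b h = u b a h.symm
  lie_eq_zero_of_disjoint : ∀ a b c d (h₁ : a ≠ b) (h₂ : c ≠ d),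
    a ≠ c → a ≠ d → b ≠ c → b ≠ d → ⁅u a b h₁, u c d h₂⁆ = 0
  four_term : ∀ a b c (hab : a ≠ b) (hbc : b ≠ c) (hac : a ≠ c),
    ⁅u a c hac, u a b hab + u b c hbc⁆ = 0

theorem IsDrinfeldKohnoFamily.map {R A L M : Type*} [CommRing R] [LieRing L] [LieAlgebra R L]
    [LieRing M] [LieAlgebra R M] {u : ∀ a b : A, a ≠ b → L}
    (hu : IsDrinfeldKohnoFamily u) (f : L →ₗ⁅R⁆ M) :
    IsDrinfeldKohnoFamily fun a b h => f (u a b h) where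
  symm a b h := congrArg f (hu.symm a b h)
  lie_eq_zero_of_disjoint a b c d h₁ h₂ hac had hbc hbd := by
    rw [← f.map_lie, hu.lie_eq_zero_of_disjoint a b c d h₁ h₂ hac had hbc hbd, map_zero]
  four_term a b c hab hbc hac := by
    rw [← map_add, ← f.map_lie, hu.four_term a b c hab hbc hac, map_zero]

section DrinfeldKohno

open FreeLieAlgebra

variable {A : Type} {L : Type*} [LieRing L] [LieAlgebra ℚ L]

theorem isDrinfeldKohnoFamily_tcl : IsDrinfeldKohnoFamily (tcl (A := A)) where
  symm a b h := sub_eq_zero.mp <| ((tIdeal A).mkQ_eq_zero).mpr <|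
    LieSubmodule.subset_lieSpan (Or.inl (Or.inl ⟨a, b, h, rfl⟩))
  lie_eq_zero_of_disjoint a b c d h₁ h₂ hac had hbc hbd := ((tIdeal A).mkQ_eq_zero).mpr <|
    LieSubmodule.subset_lieSpan (Or.inl (Or.inr ⟨a, b, c, d, h₁, h₂, hac, had, hbc, hbd, rfl⟩))
  four_term a b c hab hbc hac := ((tIdeal A).mkQ_eq_zero).mpr <|
    LieSubmodule.subset_lieSpan (Or.inr ⟨a, b, c, hab, hbc, hac, rfl⟩)

theorem isDrinfeldKohnoFamily_ttcl : IsDrinfeldKohnoFamily (ttcl (A := A)) where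
  symm a b h := sub_eq_zero.mp <| ((extIdeal A).mkQ_eq_zero).mpr <|
    LieSubmodule.subset_lieSpan (Or.inl (Or.inl (Or.inl ⟨a, b, h, rfl⟩)))
  lie_eq_zero_of_disjoint a b c d h₁ h₂ hac had hbc hbd := ((extIdeal A).mkQ_eq_zero).mpr <|
    LieSubmodule.subset_lieSpan
      (Or.inl (Or.inl (Or.inr ⟨a, b, c, d, h₁, h₂, hac, had, hbc, hbd, rfl⟩)))
  four_term a b c hab hbc hac := ((extIdeal A).mkQ_eq_zero).mpr <|
    LieSubmodule.subset_lieSpan (Or.inl (Or.inr ⟨a, b, c, hab, hbc, hac, rfl⟩))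

theorem scl_mem_center (a : A) : scl a ∈ LieAlgebra.center ℚ (DKtTilde A) := by
  refine LieAlgebra.mem_center_of_lieSpan_eq_top (lieSpan_range_mkQ_of (extIdeal A)) ?_
  rintro _ ⟨g, rfl⟩
  rw [← lie_skew, neg_eq_zero]
  exact ((extIdeal A).mkQ_eq_zero).mpr (LieSubmodule.subset_lieSpan (Or.inr ⟨a, g, rfl⟩))

namespace DKt

noncomputable def lift (u : ∀ a b : A, a ≠ b → L) (hu : IsDrinfeldKohnoFamily u) : DKt A →ₗ⁅ℚ⁆ L :=
  (tIdeal A).liftQ (FreeLieAlgebra.lift ℚ fun | .t a b h => u a b h) <| by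
    rw [tIdeal, LieSubmodule.lieSpan_le]
    rintro _ ((⟨a, b, h, rfl⟩ | ⟨a, b, c, d, h₁, h₂, hac, had, hbc, hbd, rfl⟩) |
      ⟨a, b, c, hab, hbc, hac, rfl⟩) <;>
      simp only [SetLike.mem_coe, LieHom.mem_ker, map_sub, map_add, LieHom.map_lie, lift_of_apply]
    · exact sub_eq_zero.mpr (hu.symm a b h)
    · exact hu.lie_eq_zero_of_disjoint a b c d h₁ h₂ hac had hbc hbd
    · exact hu.four_term a b c hab hbc hac

theorem lift_tcl (u : ∀ a b : A, a ≠ b → L) (hu : IsDrinfeldKohnoFamily u) (a b : A)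
    (h : a ≠ b) : lift u hu (tcl a b h) = u a b h :=
  lift_of_apply _ _

theorem hom_ext {f g : DKt A →ₗ⁅ℚ⁆ L}
    (h : ∀ a b (hab : a ≠ b), f (tcl a b hab) = g (tcl a b hab)) : f = g :=
  FreeLieAlgebra.quotient_hom_ext _ fun | .t a b hab => h a b hab

noncomputable def toDKtTilde : DKt A →ₗ⁅ℚ⁆ DKtTilde A :=
  lift ttcl isDrinfeldKohnoFamily_ttcl

theorem toDKtTilde_tcl (a b : A) (h : a ≠ b) : toDKtTilde (tcl a b h) = ttcl a b h :=
  lift_tcl ..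

end DKt

namespace DKtTilde

noncomputable def lift (u : ∀ a b : A, a ≠ b → L) (v : A → L) (hu : IsDrinfeldKohnoFamily u)
    (hvu : ∀ a b c (h : b ≠ c), ⁅v a, u b c h⁆ = 0) (hvv : ∀ a b, ⁅v a, v b⁆ = 0) :
    DKtTilde A →ₗ⁅ℚ⁆ L :=
  (extIdeal A).liftQ (FreeLieAlgebra.lift ℚ fun | .t a b h => u a b h | .s a => v a) <| by
    rw [extIdeal, LieSubmodule.lieSpan_le]
    rintro _ (((⟨a, b, h, rfl⟩ | ⟨a, b, c, d, h₁, h₂, hac, had, hbc, hbd, rfl⟩) |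
      ⟨a, b, c, hab, hbc, hac, rfl⟩) | ⟨a, g, rfl⟩) <;>
      simp only [SetLike.mem_coe, LieHom.mem_ker, map_sub, map_add, LieHom.map_lie, lift_of_apply]
    · exact sub_eq_zero.mpr (hu.symm a b h)
    · exact hu.lie_eq_zero_of_disjoint a b c d h₁ h₂ hac had hbc hbd
    · exact hu.four_term a b c hab hbc hac
    · cases g with
      | t b c h => exact hvu a b c h
      | s b => exact hvv a b

theorem lift_ttcl (u : ∀ a b : A, a ≠ b → L) (v : A → L) (hu : IsDrinfeldKohnoFamily u) hvu hvv
    (a b : A) (h : a ≠ b) : lift u v hu hvu hvv (ttcl a b h) = u a b h :=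
  lift_of_apply _ _

theorem lift_scl (u : ∀ a b : A, a ≠ b → L) (v : A → L) (hu : IsDrinfeldKohnoFamily u) hvu hvv
    (a : A) : lift u v hu hvu hvv (scl a) = v a :=
  lift_of_apply _ _

theorem hom_ext {f g : DKtTilde A →ₗ⁅ℚ⁆ L}
    (ht : ∀ a b (hab : a ≠ b), f (ttcl a b hab) = g (ttcl a b hab))
    (hs : ∀ a, f (scl a) = g (scl a)) : f = g :=
  FreeLieAlgebra.quotient_hom_ext _ fun
    | .t a b hab => ht a b hab
    | .s a => hs a

section

variable [DecidableEq A]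

noncomputable def toProd : DKtTilde A →ₗ⁅ℚ⁆ DKt A × (A → ℚ) :=
  lift (fun a b h => (tcl a b h, 0)) (fun a => (0, Pi.single a 1))
    (isDrinfeldKohnoFamily_tcl.map (LieHom.inl ℚ (DKt A) (A → ℚ)))
    (fun _ _ _ _ => Prod.ext (zero_lie _) (lie_zero _))
    (fun _ _ => Prod.ext (zero_lie _) (trivial_lie_zero _ _ _ _))

theorem toProd_ttcl (a b : A) (h : a ≠ b) : toProd (ttcl a b h) = (tcl a b h, 0) :=
  lift_ttcl ..

theorem toProd_scl (a : A) : toProd (scl a) = (0, Pi.single a 1) :=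
  lift_scl ..

theorem toProd_toDKtTilde (x : DKt A) : toProd (DKt.toDKtTilde x) = (x, 0) := by
  have : toProd.comp DKt.toDKtTilde = LieHom.inl ℚ (DKt A) (A → ℚ) :=
    DKt.hom_ext fun a b h => by
      rw [LieHom.comp_apply, DKt.toDKtTilde_tcl, toProd_ttcl, LieHom.inl_apply]
  exact LieHom.congr_fun this x

end

section

variable [Fintype A]

noncomputable def ofProd : DKt A × (A → ℚ) →ₗ⁅ℚ⁆ DKtTilde A :=
  LieHom.coprodOfCentral DKt.toDKtTilde
    (Fintype.linearCombination ℚ scl) fun f => by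
      rw [Fintype.linearCombination_apply]
      exact sum_mem fun a _ => SMulMemClass.smul_mem _ (scl_mem_center a)

theorem ofProd_apply (x : DKt A) (f : A → ℚ) :
    ofProd (x, f) = DKt.toDKtTilde x + Fintype.linearCombination ℚ scl f :=
  rfl

end

variable [DecidableEq A] [Fintype A]

theorem ofProd_comp_toProd : ofProd.comp toProd = (LieHom.id : DKtTilde A →ₗ⁅ℚ⁆ _) := by
  refine hom_ext (fun a b h => ?_) fun a => ?_
  · rw [LieHom.comp_apply, toProd_ttcl, ofProd_apply, DKt.toDKtTilde_tcl, map_zero,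
      add_zero, LieHom.id_apply]
  · rw [LieHom.comp_apply, toProd_scl, ofProd_apply, map_zero, zero_add,
      Fintype.linearCombination_apply_single, one_smul, LieHom.id_apply]

theorem toProd_linearCombination_scl (f : A → ℚ) :
    toProd (Fintype.linearCombination ℚ scl f) = (0, f) := by
  have : toProd.toLinearMap ∘ₗ Fintype.linearCombination ℚ scl = LinearMap.inr ℚ (DKt A) (A → ℚ) :=
    LinearMap.pi_ext fun a c => by
      simp [Fintype.linearCombination_apply_single, toProd_scl, ← Pi.single_smul']
  exact LinearMap.congr_fun this f

theorem toProd_comp_ofProd : toProd.comp ofProd = (LieHom.id : DKt A × (A → ℚ) →ₗ⁅ℚ⁆ _) :=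
  LieHom.ext fun ⟨x, f⟩ => by
    rw [LieHom.comp_apply, ofProd_apply, map_add, toProd_toDKtTilde, toProd_linearCombination_scl]
    simp

noncomputable def equivProd : DKtTilde A ≃ₗ⁅ℚ⁆ DKt A × (A → ℚ) :=
  { toProd with
    invFun := ofProd
    left_inv := LieHom.congr_fun ofProd_comp_toProd
    right_inv := LieHom.congr_fun toProd_comp_ofProd }

end DKtTilde

end DrinfeldKohno

/-- in `t̃_A` the classes of the generators `s_a` are central (hence span a
central abelian Lie subalgebra), and there is an isomorphism of Lie algebras
`t̃_A ≃ t_A × (A → ℚ)` (the second factor carrying the trivial, abelian, bracket)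
sending the class of `t_{ab}` to `(t_{ab}, 0)` and the class of `s_a` to `(0, e_a)`,
where `e_a` is the indicator function of `a`. -/
theorem tTilde_decomposition (A : Type) [Fintype A] [DecidableEq A] :
    (∀ (a : A) (x : DKtTilde A), ⁅scl a, x⁆ = 0) ∧
    (∀ f g : A → ℚ, ⁅f, g⁆ = 0) ∧
    ∃ e : DKtTilde A ≃ₗ⁅ℚ⁆ DKt A × (A → ℚ),
      (∀ (a b : A) (h : a ≠ b), e (ttcl a b h) = (tcl a b h, 0)) ∧
      (∀ a : A, e (scl a) = (0, Pi.single a 1)) := by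
  refine ⟨fun a x => ?_, trivial_lie_zero _ _, DKtTilde.equivProd, DKtTilde.toProd_ttcl,
    DKtTilde.toProd_scl⟩
  rw [← lie_skew, neg_eq_zero]
  exact (LieModule.mem_maxTrivSubmodule ℚ _ _ _).mp (scl_mem_center a) x
end

section
/- The element c_A = Σ_{{a,b} ⊆ A, a ≠ b} t_{ab} (the sum of the classes of the generators t_{ab} over all unordered pairs of distinct elements of A) is central in the Drinfeld–Kohno Lie algebra t_A, i.e. ⁅c_A, x⁆ = 0 for every x ∈ t_A. -/
theorem tcl_symm {A : Type} (a b : A) (h : a ≠ b) : tcl a b h = tcl b a h.symm := by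
  refine (Submodule.Quotient.eq _).mpr ?_
  exact LieSubmodule.subset_lieSpan (Or.inl (Or.inl ⟨a, b, h, rfl⟩))

/-- The class in `t_A` of an unordered pair `{a, b}`: equal to `t_{ab}` when `a ≠ b`
(well defined thanks to the relation `t_{ab} = t_{ba}`), and `0` on diagonal pairs. -/
noncomputable def tclPair {A : Type} [DecidableEq A] : Sym2 A → DKt A :=
  Sym2.lift ⟨fun a b => if h : a ≠ b then tcl a b h else 0, by
    intro a b
    by_cases h : a = b
    · subst h; rfl
    · simp only [dif_pos h, dif_pos (Ne.symm h)]
      exact tcl_symm a b h⟩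

/-- `c_A`: the sum of the classes `t_{ab}` over all unordered pairs of distinct
elements of `A`. -/
noncomputable def cA (A : Type) [Fintype A] [DecidableEq A] : DKt A :=
  ∑ p ∈ Finset.univ.filter (fun p : Sym2 A => ¬ p.IsDiag), tclPair p

section Aux
variable {A : Type}

lemma tclPair_mk [DecidableEq A] (a b : A) :
    tclPair s(a, b) = if h : a ≠ b then tcl a b h else 0 := rfl

lemma tcl_bracket_disj {a b c d : A} (h₁ : a ≠ b) (h₂ : c ≠ d)
    (hac : a ≠ c) (had : a ≠ d) (hbc : b ≠ c) (hbd : b ≠ d) :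
    ⁅tcl a b h₁, tcl c d h₂⁆ = 0 := by
  rw [tcl, tcl, ← LieSubmodule.Quotient.mk_bracket, LieSubmodule.Quotient.mk_eq_zero']
  exact LieSubmodule.subset_lieSpan
    (Or.inl (Or.inr ⟨a, b, c, d, h₁, h₂, hac, had, hbc, hbd, rfl⟩))

lemma tcl_bracket_triple {a b c : A} (hab : a ≠ b) (hbc : b ≠ c) (hac : a ≠ c) :
    ⁅tcl a c hac, tcl a b hab + tcl b c hbc⁆ = 0 := by
  have : tcl a b hab + tcl b c hbc =
      LieSubmodule.Quotient.mk (N := tIdeal A)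
        (FreeLieAlgebra.of ℚ (TGen.t a b hab) + FreeLieAlgebra.of ℚ (TGen.t b c hbc)) := by
    rfl
  rw [this, tcl, ← LieSubmodule.Quotient.mk_bracket, LieSubmodule.Quotient.mk_eq_zero']
  exact LieSubmodule.subset_lieSpan (Or.inr ⟨a, b, c, hab, hbc, hac, rfl⟩)

lemma bracket_sum_left {L : Type*} [LieRing L] {ι : Type*} (s : Finset ι) (f : ι → L) (y : L) :
    ⁅∑ i ∈ s, f i, y⁆ = ∑ i ∈ s, ⁅f i, y⁆ := by
  induction s using Finset.cons_induction with
  | empty => simp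
  | cons a s ha ih => simp [Finset.sum_cons, add_lie, ih]

lemma sum_pairs_eq [Fintype A] [DecidableEq A] {M : Type*} [AddCommMonoid M]
    (f : Sym2 A → M) (hdiag : ∀ p : Sym2 A, p.IsDiag → f p = 0) :
    ∑ x : A × A, f s(x.1, x.2) =
      2 • ∑ p ∈ Finset.univ.filter (fun p : Sym2 A => ¬ p.IsDiag), f p := by
  have hsurj : Function.Surjective (fun x : A × A => s(x.1, x.2)) := by
    intro p
    induction p using Sym2.ind with
    | _ a b => exact ⟨(a, b), rfl⟩
  rw [Finset.sum_comp f (fun x : A × A => s(x.1, x.2)),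
    Finset.image_univ_of_surjective hsurj,
    ← Finset.sum_filter_add_sum_filter_not Finset.univ (fun p : Sym2 A => ¬ p.IsDiag)]
  have h1 : ∀ p ∈ Finset.univ.filter (fun p : Sym2 A => ¬ p.IsDiag),
      (Finset.univ.filter fun x : A × A => s(x.1, x.2) = p).card • f p = 2 • f p := by
    intro p hp
    induction p using Sym2.ind with
    | _ u v =>
      have huv : u ≠ v := by
        simpa using (Finset.mem_filter.mp hp).2
      have hfib : (Finset.univ.filter fun x : A × A => s(x.1, x.2) = s(u, v))
          = {(u, v), (v, u)} := by
        ext ⟨a, b⟩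
        simp [Sym2.eq_iff, Prod.ext_iff]
      rw [hfib, Finset.card_pair (by simp [Prod.ext_iff, huv, huv.symm])]
  have h2 : ∀ p ∈ Finset.univ.filter (fun p : Sym2 A => ¬ ¬ p.IsDiag),
      (Finset.univ.filter fun x : A × A => s(x.1, x.2) = p).card • f p = 0 := by
    intro p hp
    rw [hdiag p (by simpa using (Finset.mem_filter.mp hp).2), smul_zero]
  rw [Finset.sum_congr rfl h1, Finset.sum_congr rfl h2, Finset.sum_const_zero, add_zero,
    Finset.smul_sum]

lemma cA_bracket_tcl (A : Type) [Fintype A] [DecidableEq A] (c d : A) (h : c ≠ d) :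
    ⁅cA A, tcl c d h⁆ = 0 := by
  set w := tcl c d h with hw
  have key : ∑ x : A × A, ⁅tclPair s(x.1, x.2), w⁆ = 2 • ⁅cA A, w⁆ := by
    rw [cA, bracket_sum_left]
    refine sum_pairs_eq (fun p => ⁅tclPair p, w⁆) ?_
    intro p hp
    induction p using Sym2.ind with
    | _ a b =>
      have hab : a = b := by simpa using hp
      subst hab
      show ⁅tclPair s(a, a), w⁆ = 0
      rw [tclPair_mk, dif_neg (by simp), zero_lie]
  -- triple relation in the convenient form
  have triple : ∀ (a : A) (hac : a ≠ c) (had : a ≠ d), ⁅tcl a c hac + tcl a d had, w⁆ = 0 := by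
    intro a hac had
    have h0 : ⁅tcl c d h, tcl c a hac.symm + tcl a d had⁆ = 0 :=
      tcl_bracket_triple hac.symm had h
    rw [tcl_symm c a hac.symm] at h0
    rw [← lie_skew, hw, h0, neg_zero]
  have main : ∑ x : A × A, ⁅tclPair s(x.1, x.2), w⁆ = 0 := by
    rw [Fintype.sum_prod_type]
    have hrow : ∀ a : A, a ≠ c → a ≠ d → ∑ b : A, ⁅tclPair s(a, b), w⁆ = 0 := by
      intro a hac had
      have hsub : ({c, d} : Finset A) ⊆ Finset.univ := Finset.subset_univ _
      rw [← Finset.sum_subset hsub (fun b _ hb => ?_)]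
      · rw [Finset.sum_pair h, tclPair_mk, tclPair_mk, dif_pos hac, dif_pos had, ← add_lie]
        exact triple a hac had
      · -- b ∉ {c, d}
        have hbc : b ≠ c := by simp at hb; tauto
        have hbd : b ≠ d := by simp at hb; tauto
        by_cases hba : b = a
        · subst hba; rw [tclPair_mk, dif_neg (by simp), zero_lie]
        · rw [tclPair_mk, dif_pos (Ne.symm hba), hw]
          exact tcl_bracket_disj _ _ hac had hbc hbd
    have hsplit := Finset.sum_sdiff (f := fun a : A => ∑ b : A, ⁅tclPair s(a, b), w⁆)
      (Finset.subset_univ ({c, d} : Finset A))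
    rw [← hsplit]
    have hz1 : ∑ a ∈ Finset.univ \ ({c, d} : Finset A), ∑ b : A, ⁅tclPair s(a, b), w⁆ = 0 := by
      refine Finset.sum_eq_zero fun a ha => ?_
      simp only [Finset.mem_sdiff, Finset.mem_insert, Finset.mem_singleton] at ha
      exact hrow a (fun hh => ha.2 (Or.inl hh)) (fun hh => ha.2 (Or.inr hh))
    rw [hz1, zero_add, Finset.sum_pair h, ← Finset.sum_add_distrib]
    refine Finset.sum_eq_zero fun b _ => ?_
    by_cases hbc : b = c
    · rw [hbc, tclPair_mk c c, dif_neg (by simp), zero_lie, zero_add, tclPair_mk d c,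
        dif_pos h.symm, tcl_symm d c h.symm, hw]
      exact lie_self _
    by_cases hbd : b = d
    · rw [hbd, tclPair_mk d d, dif_neg (by simp), zero_lie, add_zero, tclPair_mk c d,
        dif_pos h, hw]
      exact lie_self _
    · have hcb : c ≠ b := fun hh => hbc hh.symm
      have hdb : d ≠ b := fun hh => hbd hh.symm
      rw [tclPair_mk c b, tclPair_mk d b, dif_pos hcb, dif_pos hdb, ← add_lie,
        tcl_symm d b hdb]
      have h0 : ⁅tcl c d h, tcl c b hcb + tcl b d hdb.symm⁆ = 0 :=
        tcl_bracket_triple hcb hdb.symm h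
      rw [← lie_skew, hw, h0, neg_zero]
  have h2 : (2 : ℚ) • ⁅cA A, w⁆ = 0 := by
    rw [show ((2 : ℚ)) • ⁅cA A, w⁆ = (2 : ℕ) • ⁅cA A, w⁆ by
      rw [← Nat.cast_smul_eq_nsmul ℚ]; norm_num, ← key, main]
  exact (smul_eq_zero.mp h2).resolve_left (by norm_num)

end Aux

/-- `c_A` is central in the Drinfeld–Kohno Lie algebra `t_A`. -/
theorem cA_central (A : Type) [Fintype A] [DecidableEq A] (x : DKt A) :
    ⁅cA A, x⁆ = 0 := by
  let S : LieSubalgebra ℚ (DKt A) :=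
    { carrier := {y | ⁅cA A, y⁆ = 0}
      add_mem' := by
        intro a b ha hb
        simp only [Set.mem_setOf_eq, lie_add] at *
        rw [ha, hb, add_zero]
      zero_mem' := by simp
      smul_mem' := by
        intro t y hy
        simp only [Set.mem_setOf_eq, lie_smul] at *
        rw [hy, smul_zero]
      lie_mem' := by
        intro y z hy hz
        simp only [Set.mem_setOf_eq] at *
        rw [leibniz_lie, hy, hz]
        simp }
  suffices hS : ∀ y, y ∈ S from hS x
  let F : FreeLieAlgebra ℚ (TGen A) →ₗ⁅ℚ⁆ S :=
    FreeLieAlgebra.lift ℚ (fun g =>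
      match g with
      | .t a b hg => (⟨tcl a b hg, cA_bracket_tcl A a b hg⟩ : S))
  let mkHom : FreeLieAlgebra ℚ (TGen A) →ₗ⁅ℚ⁆ DKt A :=
    { (LieSubmodule.Quotient.mk' (tIdeal A)).toLinearMap with
      map_lie' := by
        intro x y
        exact (LieSubmodule.Quotient.mk_bracket (I := tIdeal A) x y) }
  have hcomp : S.incl.comp F = mkHom := by
    apply FreeLieAlgebra.hom_ext
    intro g
    match g with
    | .t a b hg =>
      show ((F (FreeLieAlgebra.of ℚ (TGen.t a b hg)) : S) : DKt A) = _
      rw [show F (FreeLieAlgebra.of ℚ (TGen.t a b hg)) =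
        (⟨tcl a b hg, cA_bracket_tcl A a b hg⟩ : S) from FreeLieAlgebra.lift_of_apply _ _]
      rfl
  intro y
  obtain ⟨z, rfl⟩ := LieSubmodule.Quotient.surjective_mk' (tIdeal A) y
  have : mkHom z = LieSubmodule.Quotient.mk' (tIdeal A) z := rfl
  rw [← this, ← hcomp]
  exact (F z).2
end
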